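/- arXiv:2306.16370 — 2 statements merged into one kernel-verified Lean document; each statement's English description precedes it below -/
import Mathlib

section
/- If N is a critical node of a tree T, then N is infinite and T is not reversible. -/
/- A tree is a partial order in which the set of strict predecessors of every
element is well-ordered. Basic vocabulary: condensations, automorphisms,
reversibility, heights, levels, nodes, upward closures, branches. -/

universe u v

/- The height of an element `t`: the order type of the set `(·,t)` of its strict
predecessors (which is well-ordered when the order is a tree). -/
open Classical in
noncomputable def treeHt {T : Type u} [PartialOrder T] (t : T) : Ordinal.{u} :=
  if h : IsWellOrder {s : T // s < t} (fun a b => (a : T) < (b : T)) then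
    @Ordinal.type {s : T // s < t} (fun a b => (a : T) < (b : T)) h
  else 0

/-- A partial order is a tree iff every set `(·,t)` is well-ordered by `<`. -/
def IsTree (T : Type u) [PartialOrder T] : Prop :=
  ∀ t : T, IsWellOrder {s : T // s < t} (fun a b => (a : T) < (b : T))

/-- A condensation: a bijective endomorphism. -/
def IsCond {T : Type u} [PartialOrder T] (f : T → T) : Prop :=
  Function.Bijective f ∧ ∀ s t : T, s < t → f s < f t

/-- An automorphism: a bijection preserving and reflecting `<`. -/
def IsAuto {T : Type u} [PartialOrder T] (f : T → T) : Prop :=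
  Function.Bijective f ∧ ∀ s t : T, s < t ↔ f s < f t

/-- A structure is reversible iff every condensation is an automorphism. -/
def Reversible (T : Type u) [PartialOrder T] : Prop :=
  ∀ f : T → T, IsCond f → IsAuto f

/-- The `α`-th level: elements of height `α`. -/
def level (T : Type u) [PartialOrder T] (α : Ordinal.{u}) : Set T :=
  {t : T | treeHt t = α}

/-- The height of the tree: the least ordinal `α` with `L_α = ∅`. -/
noncomputable def treeHeight (T : Type u) [PartialOrder T] : Ordinal.{u} :=
  sInf {α : Ordinal.{u} | level T α = ∅}

/-- Nodes: equivalence classes of the relation `s ∼ t` iff `(·,s) = (·,t)`. -/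
def IsNode {T : Type u} [PartialOrder T] (N : Set T) : Prop :=
  ∃ t : T, N = {s : T | Set.Iio s = Set.Iio t}

/-- `S↑`, the upward closure of `S`. -/
def upClo {T : Type u} [PartialOrder T] (S : Set T) : Set T :=
  {t : T | ∃ s ∈ S, s ≤ t}

/-- A branch: a maximal chain. -/
def IsBranch {T : Type u} [PartialOrder T] (b : Set T) : Prop :=
  IsMaxChain (· ≤ ·) b

/- The height (order type) of a chain (junk value `0` if not well-ordered;
in a tree every chain is well-ordered). -/
open Classical in
noncomputable def chainHt {T : Type u} [PartialOrder T] (b : Set T) : Ordinal.{u} :=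
  if h : IsWellOrder b (fun x y : b => (x : T) < (y : T)) then
    @Ordinal.type b (fun x y : b => (x : T) < (y : T)) h
  else 0

/-- A node `N` is critical iff there are a condensation `g` of the tree `N↑`
and `a ∈ N` with `ht_{N↑}(a) < ht_{N↑}(g(a))` (heights computed in `N↑`). -/
def IsCriticalNode {T : Type u} [PartialOrder T] (N : Set T) : Prop :=
  IsNode N ∧ ∃ g : ↥(upClo N) → ↥(upClo N), IsCond g ∧
    ∃ a : ↥(upClo N), (a : T) ∈ N ∧ treeHt a < treeHt (g a)

section stmt8aux

variable {T : Type u} [PartialOrder T]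

lemma upClo_upward {S : Set T} {s t : T} (hs : s ∈ upClo S) (h : s ≤ t) : t ∈ upClo S := by
  obtain ⟨n, hn, hns⟩ := hs; exact ⟨n, hn, hns.trans h⟩

lemma node_iio {N : Set T} (hN : IsNode N) {a b : T} (ha : a ∈ N) (hb : b ∈ N) :
    Set.Iio a = Set.Iio b := by
  obtain ⟨t₀, rfl⟩ := hN
  exact ha.trans hb.symm

lemma node_min {N : Set T} (hN : IsNode N) {a : T} (ha : a ∈ N) {s : T}
    (hs : s ∈ upClo N) : ¬ s < a := by
  intro hlt
  obtain ⟨n, hn, hns⟩ := hs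
  have hna : n < a := hns.trans_lt hlt
  have : n ∈ Set.Iio n := by rw [node_iio hN hn ha]; exact hna
  exact lt_irrefl n this

lemma min_mem_node {N : Set T} {b : T} (hb : b ∈ upClo N)
    (hmin : ∀ s ∈ upClo N, ¬ s < b) : b ∈ N := by
  obtain ⟨n, hn, hnb⟩ := hb
  rcases eq_or_lt_of_le hnb with rfl | hlt
  · exact hn
  · exact absurd hlt (hmin n ⟨n, hn, le_refl n⟩)

lemma treeHt_eq_zero {t : T} (h : IsEmpty {s : T // s < t}) : treeHt t = 0 := by
  unfold treeHt
  by_cases h1 : IsWellOrder {s : T // s < t} (fun x y => (x : T) < (y : T))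
  · haveI := h1
    rw [dif_pos h1]
    exact Ordinal.type_eq_zero_iff_isEmpty.2 h
  · rw [dif_neg h1]

lemma treeHt_eq_of_iso {a b : T}
    (e : (fun (x y : {s : T // s < a}) => (x : T) < (y : T)) ≃r
         (fun (x y : {s : T // s < b}) => (x : T) < (y : T))) :
    treeHt a = treeHt b := by
  unfold treeHt
  by_cases h1 : IsWellOrder {s : T // s < a} (fun x y => (x : T) < (y : T))
  · haveI := h1
    haveI h2 : IsWellOrder {s : T // s < b} (fun x y => (x : T) < (y : T)) :=
      e.symm.toRelEmbedding.isWellOrder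
    rw [dif_pos h1, dif_pos h2]
    exact Ordinal.type_eq.2 ⟨e⟩
  · have h2 : ¬ IsWellOrder {s : T // s < b} (fun x y => (x : T) < (y : T)) := by
      intro h2
      haveI := h2
      exact h1 e.toRelEmbedding.isWellOrder
    rw [dif_neg h1, dif_neg h2]

end stmt8aux

/-- If `N` is a critical node of a tree `T`, then `N` is infinite and
`T` is not reversible. -/
theorem stmt8 {T : Type u} [PartialOrder T] (hT : IsTree T)
    (N : Set T) (hN : IsCriticalNode N) :
    N.Infinite ∧ ¬ Reversible T := by
  obtain ⟨hNode, g, hg, a, haN, hlt⟩ := hN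
  -- the equiv underlying g
  let E : ↥(upClo N) ≃ ↥(upClo N) := Equiv.ofBijective g hg.1
  have hgE : ∀ x : ↥(upClo N), g x = E x := fun x => rfl
  -- elements of N are minimal in S, hence have height 0 in S
  have hpred : ∀ b : ↥(upClo N), (b : T) ∈ N → treeHt b = 0 := by
    intro b hb
    apply treeHt_eq_zero
    constructor
    intro x
    exact node_min hNode hb x.1.2 (Subtype.coe_lt_coe.2 x.2)
  have hne : (g a : T) ∉ N := by
    intro h
    have := hpred (g a) h
    rw [this] at hlt
    exact absurd hlt (by simp)
  constructor
  · -- N is infinite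
    by_contra hfin'
    have hfin : N.Finite := Set.not_infinite.mp hfin'
    let M : Set ↥(upClo N) := {x : ↥(upClo N) | (x : T) ∈ N}
    have hMfin : M.Finite := by
      have : M = Subtype.val ⁻¹' N := rfl
      rw [this]
      exact hfin.preimage (Set.injOn_of_injective Subtype.val_injective)
    have hmaps : Set.MapsTo E.symm M M := by
      intro x hx
      have hgx : g (E.symm x) = x := by rw [hgE]; exact E.apply_symm_apply x
      apply min_mem_node (E.symm x).2
      intro s hs hslt
      have h1 : (⟨s, hs⟩ : ↥(upClo N)) < E.symm x := Subtype.mk_lt_mk.2 hslt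
      have h2 : g ⟨s, hs⟩ < g (E.symm x) := hg.2 _ _ h1
      rw [hgx] at h2
      exact node_min hNode hx (g ⟨s, hs⟩).2 (Subtype.coe_lt_coe.2 h2)
    have hinj : Set.InjOn E.symm M := Set.injOn_of_injective E.symm.injective
    have hbij := (hMfin.injOn_iff_bijOn_of_mapsTo hmaps).1 hinj
    have hsurj : Set.SurjOn E.symm M M := hbij.surjOn
    have haM : a ∈ M := haN
    obtain ⟨b, hbM, hba⟩ := hsurj haM
    have : g a = b := by rw [hgE, ← hba, E.apply_symm_apply]
    exact hne (this ▸ hbM)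
  · -- T is not reversible
    intro hrev
    classical
    -- extend g to a condensation of T
    let f : T → T := fun t => if h : t ∈ upClo N then (g ⟨t, h⟩ : T) else t
    let finv : T → T := fun t => if h : t ∈ upClo N then (E.symm ⟨t, h⟩ : T) else t
    have hf_pos : ∀ (t : T) (h : t ∈ upClo N), f t = (g ⟨t, h⟩ : T) := by
      intro t h; simp only [f, dif_pos h]
    have hf_neg : ∀ t : T, t ∉ upClo N → f t = t := by
      intro t h; simp only [f, dif_neg h]
    have hfinv_pos : ∀ (t : T) (h : t ∈ upClo N), finv t = (E.symm ⟨t, h⟩ : T) := by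
      intro t h; simp only [finv, dif_pos h]
    have hfinv_neg : ∀ t : T, t ∉ upClo N → finv t = t := by
      intro t h; simp only [finv, dif_neg h]
    have hFl : Function.LeftInverse finv f := by
      intro t
      by_cases h : t ∈ upClo N
      · rw [hf_pos t h, hfinv_pos _ (g ⟨t, h⟩).2]
        have : (⟨(g ⟨t, h⟩ : T), (g ⟨t, h⟩).2⟩ : ↥(upClo N)) = g ⟨t, h⟩ := Subtype.coe_eta _ _
        rw [this, hgE, E.symm_apply_apply]
      · rw [hf_neg t h, hfinv_neg t h]
    have hFr : Function.RightInverse finv f := by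
      intro t
      by_cases h : t ∈ upClo N
      · rw [hfinv_pos t h, hf_pos _ (E.symm ⟨t, h⟩).2]
        have : (⟨(E.symm ⟨t, h⟩ : T), (E.symm ⟨t, h⟩).2⟩ : ↥(upClo N)) = E.symm ⟨t, h⟩ :=
          Subtype.coe_eta _ _
        rw [this, hgE, E.apply_symm_apply]
      · rw [hfinv_neg t h, hf_neg t h]
    have hfbij : Function.Bijective f :=
      Function.bijective_iff_has_inverse.2 ⟨finv, hFl, hFr⟩
    have hfmono : ∀ s t : T, s < t → f s < f t := by
      intro s t hst
      by_cases hs : s ∈ upClo N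
      · have ht : t ∈ upClo N := upClo_upward hs hst.le
        rw [hf_pos s hs, hf_pos t ht]
        exact Subtype.coe_lt_coe.2 (hg.2 _ _ (Subtype.mk_lt_mk.2 hst))
      · rw [hf_neg s hs]
        by_cases ht : t ∈ upClo N
        · rw [hf_pos t ht]
          obtain ⟨n, hn, hnt⟩ := ht
          have hsn : s < n := by
            rcases eq_or_lt_of_le hnt with rfl | hnlt
            · exact hst
            · haveI := hT t
              rcases trichotomous_of (fun (x y : {s : T // s < t}) => (x : T) < (y : T))
                ⟨s, hst⟩ ⟨n, hnlt⟩ with h | h | h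
              · exact h
              · exfalso
                have : s = n := congrArg Subtype.val h
                exact hs ⟨n, hn, this.ge⟩
              · exact absurd ⟨n, hn, le_of_lt h⟩ hs
          obtain ⟨n', hn', hn'g⟩ := (g ⟨t, upClo_upward ⟨n, hn, hnt⟩ le_rfl⟩).2
          have : s ∈ Set.Iio n' := by
            rw [← node_iio hNode hn hn']
            exact hsn
          calc s < n' := this
          _ ≤ _ := by
            convert hn'g using 2
        · rw [hf_neg t ht]
          exact hst
    have hauto := hrev f ⟨hfbij, hfmono⟩
    -- g is an automorphism of S
    have gauto : ∀ x y : ↥(upClo N), x < y ↔ g x < g y := by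
      intro x y
      have hx : f (x : T) = (g x : T) := by
        rw [hf_pos _ x.2]
      have hy : f (y : T) = (g y : T) := by
        rw [hf_pos _ y.2]
      constructor
      · intro h
        have := (hauto.2 (x : T) (y : T)).1 (Subtype.coe_lt_coe.2 h)
        rw [hx, hy] at this
        exact Subtype.coe_lt_coe.1 this
      · intro h
        have : f (x : T) < f (y : T) := by rw [hx, hy]; exact Subtype.coe_lt_coe.2 h
        exact Subtype.coe_lt_coe.1 ((hauto.2 (x : T) (y : T)).2 this)
    -- build an order isomorphism between predecessors of a and of g a
    let e : (fun (x y : {s : ↥(upClo N) // s < a}) => (x : ↥(upClo N)) < (y : ↥(upClo N))) ≃r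
            (fun (x y : {s : ↥(upClo N) // s < g a}) => (x : ↥(upClo N)) < (y : ↥(upClo N))) :=
      { toFun := fun x => ⟨g x.1, (gauto x.1 a).1 x.2⟩
        invFun := fun y => ⟨E.symm y.1, by
          apply (gauto (E.symm y.1) a).2
          rw [hgE, E.apply_symm_apply]
          exact y.2⟩
        left_inv := fun x => Subtype.ext (by
          simp only [hgE, E.symm_apply_apply])
        right_inv := fun y => Subtype.ext (by
          simp only [hgE, E.apply_symm_apply])
        map_rel_iff' := by
          intro x y
          exact (gauto x.1 y.1).symm }
    have := treeHt_eq_of_iso e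
    rw [this] at hlt
    exact lt_irrefl _ hlt
end

section
/- If T is a tree all of whose nodes are finite and ht(T) ≤ ω+1, then T is reversible. -/
/- A tree is a partial order in which the set of strict predecessors of every
element is well-ordered. Basic vocabulary: condensations, automorphisms,
reversibility, heights, levels, nodes, upward closures, branches. -/

universe u v

section Stmt11Aux

open Ordinal

variable {T : Type u} [PartialOrder T]

theorem treeHt_eq (hT : IsTree T) (t : T) :
    treeHt t = @Ordinal.type {s : T // s < t} (fun a b => (a : T) < (b : T)) (hT t) := by
  unfold treeHt
  rw [dif_pos (hT t)]

/-- Any two strict predecessors of `t` are comparable. -/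
theorem comp3 (hT : IsTree T) {t a b : T} (ha : a < t) (hb : b < t) :
    a < b ∨ a = b ∨ b < a := by
  rcases @trichotomous _ _ (hT t).toTrichotomous ⟨a, ha⟩ ⟨b, hb⟩ with h | h | h
  · exact Or.inl h
  · exact Or.inr (Or.inl (congrArg Subtype.val h))
  · exact Or.inr (Or.inr h)

theorem treeHt_typein (hT : IsTree T) {s t : T} (h : s < t) :
    treeHt s =
      @Ordinal.typein {x : T // x < t} (fun a b => (a : T) < (b : T)) (hT t) ⟨s, h⟩ := by
  haveI := hT t
  haveI := hT s
  rw [treeHt_eq hT s, ← Ordinal.type_subrel]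
  exact Ordinal.type_eq.2 ⟨⟨⟨fun x => ⟨⟨x.1, lt_trans x.2 h⟩, x.2⟩,
    fun y => ⟨y.1.1, y.2⟩, fun x => rfl, fun y => rfl⟩, Iff.rfl⟩⟩

theorem treeHt_lt (hT : IsTree T) {s t : T} (h : s < t) : treeHt s < treeHt t := by
  haveI := hT t
  rw [treeHt_typein hT h, treeHt_eq hT t]
  exact Ordinal.typein_lt_type _ _

theorem treeHt_inj_below (hT : IsTree T) {t a b : T} (ha : a < t) (hb : b < t)
    (hab : treeHt a = treeHt b) : a = b := by
  rcases comp3 hT ha hb with h | h | h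
  · exact absurd (treeHt_lt hT h) (by rw [hab]; exact lt_irrefl _)
  · exact h
  · exact absurd (treeHt_lt hT h) (by rw [hab]; exact lt_irrefl _)

theorem exists_lt_of_lt_treeHt (hT : IsTree T) {t : T} {β : Ordinal}
    (hβ : β < treeHt t) : ∃ s, s < t ∧ treeHt s = β := by
  haveI := hT t
  rw [treeHt_eq hT t] at hβ
  obtain ⟨a, ha⟩ := Ordinal.typein_surj _ hβ
  exact ⟨a.1, a.2, by rw [treeHt_typein hT a.2]; exact ha⟩

theorem treeHt_le_cond (hT : IsTree T) {f : T → T} (hf : IsCond f) (t : T) :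
    treeHt t ≤ treeHt (f t) := by
  haveI := hT t
  haveI := hT (f t)
  rw [treeHt_eq hT t, treeHt_eq hT (f t)]
  exact (RelEmbedding.ofMonotone (fun a => (⟨f a.1, hf.2 a.1 t a.2⟩ : {x : T // x < f t}))
    (fun a b hab => hf.2 a.1 b.1 hab)).ordinal_type_le

theorem treeHt_eq_zero_s11 (hT : IsTree T) {s : T} : treeHt s = 0 ↔ Set.Iio s = ∅ := by
  haveI := hT s
  rw [treeHt_eq hT s, Ordinal.type_eq_zero_iff_isEmpty, isEmpty_subtype,
    Set.eq_empty_iff_forall_notMem]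
  simp [Set.mem_Iio]

theorem isCond_iterate {f : T → T} (hf : IsCond f) (k : ℕ) : IsCond f^[k] := by
  refine ⟨hf.1.iterate k, ?_⟩
  induction k with
  | zero => simp
  | succ k ih =>
    intro s t hst
    rw [Function.iterate_succ_apply', Function.iterate_succ_apply']
    exact hf.2 _ _ (ih s t hst)

/-- The cone above an element is again a tree. -/
theorem cone_isTree (hT : IsTree T) (s₀ : T) : IsTree {x : T // s₀ < x} := by
  intro w
  haveI := hT w.val
  exact RelEmbedding.isWellOrder
    (⟨⟨fun a => (⟨a.1.1, Subtype.coe_lt_coe.2 a.2⟩ : {x : T // x < w.val}),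
      fun a b hab => by
        have h2 := congrArg (Subtype.val (p := fun x : T => x < w.val)) hab
        exact Subtype.ext (Subtype.ext h2)⟩,
      by intro a b; exact Subtype.coe_lt_coe⟩ :
      (fun a b : {x : {x : T // s₀ < x} // x < w} => (a : {x : T // s₀ < x}) < b) ↪r
      (fun a b : {x : T // x < w.val} => (a : T) < b))

/-- Heights in the cone above a root: `ht_T w = 1 + ht_C w`. -/
theorem cone_treeHt (hT : IsTree T) {s₀ : T} (h0 : Set.Iio s₀ = ∅)
    (w : {x : T // s₀ < x}) :
    treeHt w.val = 1 + treeHt w := by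
  haveI := hT w.val
  haveI := cone_isTree hT s₀ w
  have hnos : ∀ z : T, ¬ z < s₀ := by
    intro z hz
    have : z ∈ Set.Iio s₀ := hz
    rw [h0] at this
    exact this
  rw [treeHt_eq hT w.val, treeHt_eq (cone_isTree hT s₀) w]
  set Ffun : PUnit.{u+1} ⊕ {x : {x : T // s₀ < x} // x < w} → {x : T // x < w.val} :=
    fun y => Sum.rec (fun _ => (⟨s₀, w.2⟩ : {x : T // x < w.val}))
      (fun a => ⟨a.1.1, Subtype.coe_lt_coe.2 a.2⟩) y with hFfun
  have hmono : ∀ a b, Sum.Lex (@emptyRelation PUnit.{u+1})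
      (fun a b : {x : {x : T // s₀ < x} // x < w} => (a : {x : T // s₀ < x}) < b) a b →
      (Ffun a : T) < (Ffun b : T) := by
    intro a b hab
    cases hab with
    | inl h => exact h.elim
    | inr h => exact Subtype.coe_lt_coe.2 h
    | sep a b => exact b.1.2
  have hsurjF : Function.Surjective Ffun := by
    intro y
    rcases comp3 hT y.2 w.2 with h | h | h
    · exact absurd h (hnos y.1)
    · exact ⟨Sum.inl PUnit.unit, Subtype.ext h.symm⟩
    · exact ⟨Sum.inr ⟨⟨y.1, h⟩, Subtype.coe_lt_coe.1 y.2⟩, Subtype.ext rfl⟩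
  have hemb := @RelEmbedding.ofMonotone _ _
    (Sum.Lex (@emptyRelation PUnit.{u+1})
      (fun a b : {x : {x : T // s₀ < x} // x < w} => (a : {x : T // s₀ < x}) < b))
    (fun a b : {x : T // x < w.val} => (a : T) < b) inferInstance inferInstance Ffun hmono
  have hsurj : Function.Surjective (@RelEmbedding.ofMonotone _ _
      (Sum.Lex (@emptyRelation PUnit.{u+1})
        (fun a b : {x : {x : T // s₀ < x} // x < w} => (a : {x : T // s₀ < x}) < b))
      (fun a b : {x : T // x < w.val} => (a : T) < b) inferInstance inferInstance Ffun hmono) := by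
    rw [show ⇑(@RelEmbedding.ofMonotone _ _
      (Sum.Lex (@emptyRelation PUnit.{u+1})
        (fun a b : {x : {x : T // s₀ < x} // x < w} => (a : {x : T // s₀ < x}) < b))
      (fun a b : {x : T // x < w.val} => (a : T) < b) inferInstance inferInstance Ffun hmono)
      = Ffun from RelEmbedding.ofMonotone_coe _ _]
    exact hsurjF
  have hiso := RelIso.ofSurjective _ hsurj
  rw [← hiso.ordinal_type_eq, Ordinal.type_sum_lex]
  congr 1

/-- Nodes of the cone are finite if nodes of `T` are. -/
theorem cone_nodes (hT : IsTree T) {s₀ : T} (h0 : Set.Iio s₀ = ∅)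
    (hfin : ∀ N : Set T, IsNode N → N.Finite) :
    ∀ N : Set {x : T // s₀ < x}, IsNode N → N.Finite := by
  have hnos : ∀ z : T, ¬ z < s₀ := by
    intro z hz
    have : z ∈ Set.Iio s₀ := hz
    rw [h0] at this
    exact this
  have hsub : ∀ x y : {x : T // s₀ < x}, Set.Iio x ⊆ Set.Iio y →
      Set.Iio x.val ⊆ Set.Iio y.val := by
    intro x y hxy z hz
    have hz' : z < x.val := hz
    rcases comp3 hT hz' x.2 with h | h | h
    · exact absurd h (hnos z)
    · rw [h]; exact y.2
    · have hmem : (⟨z, h⟩ : {x : T // s₀ < x}) ∈ Set.Iio x := Subtype.coe_lt_coe.1 hz'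
      have := hxy hmem
      exact Subtype.coe_lt_coe.2 this
  rintro N ⟨w, rfl⟩
  refine Set.Finite.of_finite_image ?_ Subtype.val_injective.injOn
  refine (hfin {s : T | Set.Iio s = Set.Iio w.val} ⟨w.val, rfl⟩).subset ?_
  rintro - ⟨x, hx, rfl⟩
  have hx' : Set.Iio x = Set.Iio w := hx
  exact Set.Subset.antisymm (hsub x w hx'.le) (hsub w x hx'.ge)

/-- Main lemma: condensations preserve finite heights, in any tree with finite
nodes all of whose elements have height at most `ω`. -/
theorem main_lemma (n : ℕ) :
    ∀ {T : Type u} [PartialOrder T], IsTree T → (∀ N : Set T, IsNode N → N.Finite) →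
      (∀ t : T, treeHt t ≤ Ordinal.omega0) → ∀ f : T → T, IsCond f →
      ∀ t : T, treeHt t = (n : Ordinal) → treeHt (f t) = (n : Ordinal) := by
  induction n using Nat.strong_induction_on with
  | _ n IH =>
  intro T _ hT hfin hω f hf t ht
  rcases n with _ | m
  · -- base case `n = 0`
    rw [Nat.cast_zero] at ht ⊢
    have hmemL0 : ∀ s : T, s ∈ {s : T | Set.Iio s = ∅} ↔ treeHt s = 0 := by
      intro s
      exact ⟨fun h => (treeHt_eq_zero_s11 hT).2 h, fun h => (treeHt_eq_zero_s11 hT).1 h⟩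
    set L0 : Set T := {s : T | Set.Iio s = ∅} with hL0def
    have htL0 : t ∈ L0 := (hmemL0 t).2 ht
    have hnode : IsNode L0 := by
      refine ⟨t, ?_⟩
      have : Set.Iio t = ∅ := (treeHt_eq_zero_s11 hT).1 ht
      rw [this]
    have hfinL0 : L0.Finite := hfin L0 hnode
    have hsub : L0 ⊆ f '' L0 := by
      intro w hw
      obtain ⟨v, hv⟩ := hf.1.2 w
      refine ⟨v, ?_, hv⟩
      rw [hmemL0] at hw ⊢
      have h1 : treeHt v ≤ treeHt (f v) := treeHt_le_cond hT hf v
      rw [hv, hw] at h1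
      exact le_antisymm h1 (zero_le (a := treeHt v))
    have himg : L0 = f '' L0 := by
      refine Set.eq_of_subset_of_ncard_le hsub ?_ (hfinL0.image f)
      rw [Set.ncard_image_of_injOn hf.1.1.injOn]
    have hft : f t ∈ L0 := by
      rw [himg]
      exact Set.mem_image_of_mem f htL0
    exact (hmemL0 (f t)).1 hft
  · -- inductive step `n = m + 1`
    have hcast : ((m + 1 : ℕ) : Ordinal) = 1 + (m : Ordinal) := by
      rw [Ordinal.one_add_natCast]
      exact congrArg Nat.cast (Order.succ_eq_add_one m).symm
    have hpos : (0 : Ordinal) < treeHt t := by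
      rw [ht]
      exact_mod_cast Nat.succ_pos m
    obtain ⟨s₀, hs₀t, hs₀⟩ := exists_lt_of_lt_treeHt hT hpos
    have hIio : Set.Iio s₀ = ∅ := (treeHt_eq_zero_s11 hT).1 hs₀
    -- find a power of `f` fixing the root `s₀`
    set L0 : Set T := {s : T | Set.Iio s = ∅} with hL0def
    have hfinL0 : L0.Finite := by
      refine hfin L0 ⟨s₀, ?_⟩
      rw [hIio]
    have hroot_pres : ∀ (g : T → T), IsCond g → ∀ z : T, treeHt z = 0 → treeHt (g z) = 0 := by
      intro g hg z hz
      have := IH 0 (Nat.succ_pos m) hT hfin hω g hg z (by rw [Nat.cast_zero, hz])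
      rwa [Nat.cast_zero] at this
    have hfL0 : ∀ x ∈ L0, f x ∈ L0 := by
      intro x hx
      exact (treeHt_eq_zero_s11 hT).1
        (hroot_pres f hf x ((treeHt_eq_zero_s11 hT).2 hx))
    have hiter : ∀ k : ℕ, f^[k] s₀ ∈ L0 := by
      intro k
      induction k with
      | zero => exact hIio
      | succ k ihk =>
        rw [Function.iterate_succ_apply']
        exact hfL0 _ ihk
    have hnotinj : ¬ Function.Injective (fun k : ℕ => f^[k] s₀) := by
      intro hinj
      exact (Set.infinite_of_injective_forall_mem hinj fun k => hiter k) hfinL0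
    obtain ⟨i, j, hij, hne⟩ : ∃ i j : ℕ, i < j ∧ f^[i] s₀ = f^[j] s₀ := by
      simp only [Function.Injective] at hnotinj
      push_neg at hnotinj
      obtain ⟨i, j, h1, h2⟩ := hnotinj
      rcases lt_or_gt_of_ne h2 with h | h
      · exact ⟨i, j, h, h1⟩
      · exact ⟨j, i, h, h1.symm⟩
    set p := j - i with hp
    have hppos : 0 < p := Nat.sub_pos_of_lt hij
    have hfix : f^[p] s₀ = s₀ := by
      have h1 : f^[i] (f^[p] s₀) = f^[i] s₀ := by
        rw [← Function.iterate_add_apply, hp, Nat.add_sub_cancel' hij.le]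
        exact hne.symm
      exact hf.1.1.iterate i h1
    set fp := f^[p] with hfpdef
    have hfp : IsCond fp := isCond_iterate hf p
    -- the cone above `s₀`
    have hTC := cone_isTree hT s₀
    have hF0 : ∀ x : T, s₀ < x → s₀ < fp x := by
      intro x hx
      have := hfp.2 s₀ x hx
      rwa [hfix] at this
    set F : {x : T // s₀ < x} → {x : T // s₀ < x} :=
      fun x => ⟨fp x.1, hF0 x.1 x.2⟩ with hFdef
    have hFsurj : Function.Surjective F := by
      intro w
      obtain ⟨v, hv⟩ := hfp.1.2 w.1
      have hvpos : (0 : Ordinal) < treeHt v := by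
        rcases eq_zero_or_pos (treeHt v) with h | h
        · exfalso
          have h1 : treeHt (fp v) = 0 := hroot_pres fp hfp v h
          rw [hv] at h1
          have h2 : Set.Iio w.val = ∅ := (treeHt_eq_zero_s11 hT).1 h1
          have : s₀ ∈ Set.Iio w.val := w.2
          rw [h2] at this
          exact this
        · exact h
      obtain ⟨r, hrv, hr0⟩ := exists_lt_of_lt_treeHt hT hvpos
      have hfr : treeHt (fp r) = 0 := hroot_pres fp hfp r hr0
      have hfrw : fp r < w.1 := by
        rw [← hv]
        exact hfp.2 r v hrv
      have heq : fp r = s₀ :=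
        treeHt_inj_below hT hfrw w.2 (by rw [hfr, hs₀])
      have hr : r = s₀ := hfp.1.1 (by rw [heq, hfix])
      rw [hr] at hrv
      exact ⟨⟨v, hrv⟩, Subtype.ext hv⟩
    have hFcond : IsCond F := by
      refine ⟨⟨fun a b hab => ?_, hFsurj⟩, fun a b hab => ?_⟩
      · exact Subtype.ext (hfp.1.1 (congrArg Subtype.val hab))
      · exact Subtype.coe_lt_coe.1 (hfp.2 a.1 b.1 (Subtype.coe_lt_coe.2 hab))
    have hωC : ∀ x : {x : T // s₀ < x}, treeHt x ≤ Ordinal.omega0 := by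
      intro x
      have h1 := cone_treeHt hT hIio x
      have h2 : treeHt x ≤ 1 + treeHt x := le_add_self
      exact h2.trans (h1 ▸ hω x.val)
    have htC : treeHt (⟨t, hs₀t⟩ : {x : T // s₀ < x}) = (m : Ordinal) := by
      have h1 := cone_treeHt hT hIio ⟨t, hs₀t⟩
      rw [ht, hcast] at h1
      exact ((add_left_cancel_iff (a := (1 : Ordinal))).1 h1).symm
    have hIHm := IH m (Nat.lt_succ_self m) hTC (cone_nodes hT hIio hfin) hωC F hFcond
      ⟨t, hs₀t⟩ htC
    have hfpt : treeHt (fp t) = ((m + 1 : ℕ) : Ordinal) := by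
      have h1 := cone_treeHt hT hIio (F ⟨t, hs₀t⟩)
      rw [hIHm] at h1
      rw [hcast]
      exact h1
    have hchain : ∀ (k : ℕ) (x : T), treeHt x ≤ treeHt (f^[k] x) := by
      intro k
      induction k with
      | zero => intro x; simp
      | succ k ihk =>
        intro x
        rw [Function.iterate_succ_apply]
        exact (treeHt_le_cond hT hf x).trans (ihk (f x))
    have h1 : treeHt (f t) ≤ ((m + 1 : ℕ) : Ordinal) := by
      have h2 : treeHt (f t) ≤ treeHt (f^[p] t) := by
        have hp1 : 1 ≤ p := hppos
        have h3 := hchain (p - 1) (f t)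
        have h4 : f^[p - 1] (f t) = f^[p] t := by
          rw [← Function.iterate_succ_apply]
          congr 1
          omega
        rwa [h4] at h3
      rw [← hfpt]
      exact h2
    have h2 : ((m + 1 : ℕ) : Ordinal) ≤ treeHt (f t) := by
      rw [← ht]
      exact treeHt_le_cond hT hf t
    exact le_antisymm h1 h2

end Stmt11Aux

/-- If `T` is a tree all of whose nodes are finite and
`ht(T) ≤ ω + 1`, then `T` is reversible. -/
theorem stmt11 {T : Type u} [PartialOrder T] (hT : IsTree T)
    (hfin : ∀ N : Set T, IsNode N → N.Finite)
    (hht : treeHeight T ≤ Ordinal.omega0 + 1) :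
    Reversible T := by
  -- Step 1: every element has height at most `ω`.
  have hω : ∀ t : T, treeHt t ≤ Ordinal.omega0 := by
    have hne : {α : Ordinal.{u} | level T α = ∅}.Nonempty := by
      by_contra hcon
      rw [Set.not_nonempty_iff_eq_empty] at hcon
      have hall : ∀ α : Ordinal.{u}, ∃ x : T, treeHt x = α := by
        intro α
        have h1 : level T α ≠ ∅ := by
          intro h
          have : α ∈ {α : Ordinal.{u} | level T α = ∅} := h
          rw [hcon] at this
          exact this
        obtain ⟨x, hx⟩ := Set.nonempty_iff_ne_empty.2 h1
        exact ⟨x, hx⟩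
      choose e he using hall
      have hinj : Function.Injective e := fun a b hab => by rw [← he a, ← he b, hab]
      exact not_small_ordinal.{u, u} (small_of_injective hinj)
    have hmem : level T (treeHeight T) = ∅ := csInf_mem hne
    intro t
    by_contra hcon
    push_neg at hcon
    have h1 : Ordinal.omega0 + 1 ≤ treeHt t := by
      rw [Ordinal.add_one_eq_succ]
      exact Order.succ_le_of_lt hcon
    have h2 : treeHeight T ≤ treeHt t := le_trans hht h1
    rcases lt_or_eq_of_le h2 with h | h
    · obtain ⟨s, _, hs⟩ := exists_lt_of_lt_treeHt hT h
      have : s ∈ level T (treeHeight T) := hs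
      rw [hmem] at this
      exact this
    · have : t ∈ level T (treeHeight T) := h.symm
      rw [hmem] at this
      exact this
  intro f hf
  -- Step 2: `f` preserves heights.
  have hpres : ∀ x : T, treeHt (f x) = treeHt x := by
    intro x
    rcases lt_or_eq_of_le (hω x) with h | h
    · obtain ⟨k, hk⟩ := Ordinal.lt_omega0.1 h
      rw [hk]
      exact main_lemma k hT hfin hω f hf x hk
    · exact le_antisymm ((hω (f x)).trans_eq h.symm) (h ▸ (h.symm ▸ treeHt_le_cond hT hf x))
  -- Step 3: `f` reflects the order.
  refine ⟨hf.1, fun s t => ⟨hf.2 s t, fun hst => ?_⟩⟩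
  have hlt : treeHt (f s) < treeHt t := by
    rw [← hpres t]
    exact treeHt_lt hT hst
  obtain ⟨z, hzt, hz⟩ := exists_lt_of_lt_treeHt hT hlt
  have h1 : f z < f t := hf.2 z t hzt
  have h2 : treeHt (f z) = treeHt (f s) := by rw [hpres z, hz]
  have h3 : f z = f s := treeHt_inj_below hT h1 hst h2
  have h4 : z = s := hf.1.1 h3
  rw [← h4]
  exact hzt
end
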